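/- arXiv:1308.0544 — 2 statements merged into one kernel-verified Lean document; each statement's English description precedes it below -/
import Mathlib

section
/- In a Condorcet election, p is prevented from being a Condorcet winner under some assignment of manipulator ballots iff p fails to be a Condorcet winner when all manipulators rank p last; i.e., ranking p last in every manipulator ballot minimizes, for each b ≠ p, the number of voters preferring p to b. -/
/-- Number of voters preferring `q` to `r` (rankings: smaller value = more preferred). -/
def prefCount {ι C : Type*} [Fintype ι] (b : ι → C → ℕ) (q r : C) : ℕ :=
  (Finset.univ.filter fun v : ι => b v q < b v r).card

/-- `p` is a Condorcet winner. -/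
def condorcetWin {ι C : Type*} [Fintype ι] [Fintype C] (b : ι → C → ℕ) (p : C) : Prop :=
  ∀ q : C, q ≠ p → Fintype.card ι < 2 * prefCount b p q

/-- Voter `v` ranks `p` last in ballot assignment `b`. -/
def ranksLast {ι C : Type*} (b : ι → C → ℕ) (v : ι) (p : C) : Prop :=
  ∀ q : C, q ≠ p → b v q < b v p

/-! A manipulator who ranks `p` last prefers `p` to nobody, and every other voter votes the same
under any manipulation, so ranking `p` last shrinks each set of voters preferring `p` to some `q`.
Being a Condorcet winner is monotone in these counts. -/

section Condorcet

variable {ι C : Type*} [Fintype ι]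

theorem prefCount_le_prefCount {b b' : ι → C → ℕ} {q r : C}
    (h : ∀ v, b v q < b v r → b' v q < b' v r) : prefCount b q r ≤ prefCount b' q r :=
  Finset.card_le_card fun v hv => by
    simp only [Finset.mem_filter, Finset.mem_univ, true_and] at hv ⊢
    exact h v hv

theorem prefCount_le_of_ranksLast {M : Finset ι} {b₀ b : ι → C → ℕ} {p q : C}
    (hagree : ∀ v, v ∉ M → b₀ v = b v) (hlast : ∀ m ∈ M, ranksLast b₀ m p) (hq : q ≠ p) :
    prefCount b₀ p q ≤ prefCount b p q := by
  refine prefCount_le_prefCount fun v hv => ?_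
  by_cases hvM : v ∈ M
  · exact absurd (hlast v hvM q hq) hv.asymm
  · rwa [← hagree v hvM]

theorem condorcetWin.of_prefCount_le [Fintype C] {b b' : ι → C → ℕ} {p : C}
    (hwin : condorcetWin b p) (hle : ∀ q, q ≠ p → prefCount b p q ≤ prefCount b' p q) :
    condorcetWin b' p := fun q hq =>
  (hwin q hq).trans_le (Nat.mul_le_mul_left 2 (hle q hq))

end Condorcet

theorem stmt12_general {ι C : Type*} [Fintype ι] [Fintype C]
    (M : Finset ι) (fixed : ι → C → ℕ) (p : C) :
    ∀ b0 : ι → C → ℕ, (∀ v, Function.Injective (b0 v)) →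
      (∀ v, v ∉ M → b0 v = fixed v) → (∀ m ∈ M, ranksLast b0 m p) →
      ((∀ b : ι → C → ℕ, (∀ v, Function.Injective (b v)) → (∀ v, v ∉ M → b v = fixed v) →
          ∀ q : C, q ≠ p → prefCount b0 p q ≤ prefCount b p q) ∧
       ((∃ b : ι → C → ℕ, (∀ v, Function.Injective (b v)) ∧
            (∀ v, v ∉ M → b v = fixed v) ∧ ¬ condorcetWin b p) ↔ ¬ condorcetWin b0 p)) := by
  intro b0 hinj0 hout0 hlast0
  have minimal : ∀ b : ι → C → ℕ, (∀ v, v ∉ M → b v = fixed v) →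
      ∀ q, q ≠ p → prefCount b0 p q ≤ prefCount b p q := fun b hout _ hq =>
    prefCount_le_of_ranksLast (fun v hv => (hout0 v hv).trans (hout v hv).symm) hlast0 hq
  refine ⟨fun b _ hout => minimal b hout, ?_, fun hlose => ⟨b0, hinj0, hout0, hlose⟩⟩
  rintro ⟨b, -, hout, hlose⟩ hwin0
  exact hlose (hwin0.of_prefCount_le (minimal b hout))

/-- Ranking `p` last in every manipulator ballot minimizes, for each `q ≠ p`, the number
of voters preferring `p` to `q`; hence some manipulation prevents `p` from being a
Condorcet winner iff `p` fails to be a Condorcet winner when all manipulators rank `p`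
last. -/
theorem stmt12 {ι C : Type*} [Fintype ι] [Fintype C] [DecidableEq ι] [DecidableEq C]
    (M : Finset ι) (fixed : ι → C → ℕ) (hfix : ∀ v, Function.Injective (fixed v)) (p : C) :
    ∀ b0 : ι → C → ℕ, (∀ v, Function.Injective (b0 v)) →
      (∀ v, v ∉ M → b0 v = fixed v) → (∀ m ∈ M, ranksLast b0 m p) →
      ((∀ b : ι → C → ℕ, (∀ v, Function.Injective (b v)) → (∀ v, v ∉ M → b v = fixed v) →
          ∀ q : C, q ≠ p → prefCount b0 p q ≤ prefCount b p q) ∧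
       ((∃ b : ι → C → ℕ, (∀ v, Function.Injective (b v)) ∧
            (∀ v, v ∉ M → b v = fixed v) ∧ ¬ condorcetWin b p) ↔ ¬ condorcetWin b0 p)) :=
  stmt12_general M fixed p
end

section
/- In an approval election with registered voters V (containing k manipulators), unregistered candidate set D, and despised candidate p: p can be prevented from winning (by the chair adding at most one candidate from D and the manipulators approving a single common candidate d) iff there exists a candidate d in (C ∪ D) \ {p} whose approval score among V plus k is strictly greater than p's approval score among V. -/
/-!
Each manipulator contributes at most one approval to any candidate, so manipulation can raise a
rival `d` to at most its sincere score plus `k` and cannot push `p` below its sincere score.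
Conversely, if every manipulator approves `d` alone, `d` reaches exactly that bound while `p`
keeps its sincere score; the chair adds `d` when it is not already registered.
-/

/-- Approval score of `c` over all voters. -/
def aScoreAll {ι A : Type*} [Fintype ι] (app : ι → A → Bool) (c : A) : ℕ :=
  (Finset.univ.filter fun v : ι => app v c = true).card

/-- Approval score of `c` counting only the non-manipulator voters (those outside `M`). -/
def nScore {ι A : Type*} [Fintype ι] [DecidableEq ι] (M : Finset ι) (app : ι → A → Bool)
    (c : A) : ℕ :=
  (Mᶜ.filter fun v : ι => app v c = true).card

section Scores

variable {ι A : Type*} [Fintype ι] [DecidableEq ι] (M : Finset ι)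

theorem aScoreAll_eq_card_filter_add_nScore (app : ι → A → Bool) (c : A) :
    aScoreAll app c = (M.filter fun v => app v c = true).card + nScore M app c := by
  rw [aScoreAll, nScore, ← Finset.card_union_of_disjoint
    (Finset.disjoint_filter_filter disjoint_compl_right), ← Finset.filter_union,
    Finset.union_compl]

theorem nScore_congr {m m' : ι → A → Bool} (h : ∀ v, v ∉ M → m v = m' v) (c : A) :
    nScore M m c = nScore M m' c :=
  congrArg Finset.card <| Finset.filter_congr fun v hv => by
    rw [h v (Finset.mem_compl.1 hv)]

theorem nScore_le_aScoreAll (app : ι → A → Bool) (c : A) : nScore M app c ≤ aScoreAll app c := by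
  rw [aScoreAll_eq_card_filter_add_nScore M]
  exact Nat.le_add_left _ _

theorem aScoreAll_le_nScore_add_card (app : ι → A → Bool) (c : A) :
    aScoreAll app c ≤ nScore M app c + M.card := by
  rw [aScoreAll_eq_card_filter_add_nScore M, add_comm]
  exact Nat.add_le_add_left (Finset.card_filter_le _ _) _

end Scores

section ApproveOnly

variable {ι A : Type*} [DecidableEq ι] [DecidableEq A] (M : Finset ι)

def approveOnly (fixed : ι → A → Bool) (d : A) : ι → A → Bool :=
  fun v a => if v ∈ M then decide (a = d) else fixed v a

theorem approveOnly_of_notMem (fixed : ι → A → Bool) (d : A) {v : ι} (hv : v ∉ M) :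
    approveOnly M fixed d v = fixed v := by
  funext a
  simp [approveOnly, hv]

theorem aScoreAll_approveOnly_self [Fintype ι] (fixed : ι → A → Bool) (d : A) :
    aScoreAll (approveOnly M fixed d) d = nScore M fixed d + M.card := by
  rw [aScoreAll_eq_card_filter_add_nScore M,
    nScore_congr M (fun _ => approveOnly_of_notMem M fixed d), add_comm,
    Finset.filter_true_of_mem fun v hv => by simp [approveOnly, hv]]

theorem aScoreAll_approveOnly_of_ne [Fintype ι] (fixed : ι → A → Bool) {c d : A} (hcd : c ≠ d) :
    aScoreAll (approveOnly M fixed d) c = nScore M fixed c := by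
  rw [aScoreAll_eq_card_filter_add_nScore M,
    nScore_congr M (fun _ => approveOnly_of_notMem M fixed d),
    Finset.filter_false_of_mem fun v hv => by simp [approveOnly, hv, hcd],
    Finset.card_empty, zero_add]

end ApproveOnly

theorem Finset.exists_subset_card_le_one_mem_union {A : Type*} [DecidableEq A] {C D : Finset A}
    {d : A} (hd : d ∈ C ∪ D) : ∃ E ⊆ D, E.card ≤ 1 ∧ d ∈ C ∪ E := by
  by_cases hdC : d ∈ C
  · exact ⟨∅, Finset.empty_subset _, by simp, Finset.mem_union_left _ hdC⟩
  · refine ⟨{d}, ?_, by simp, Finset.mem_union_right _ (Finset.mem_singleton_self d)⟩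
    rw [Finset.singleton_subset_iff]
    exact (Finset.mem_union.1 hd).resolve_left hdC

theorem stmt14_general {ι A : Type*} [Fintype ι] [DecidableEq ι] [DecidableEq A]
    (C D : Finset A) (p : A)
    (M : Finset ι) (fixed : ι → A → Bool) :
    (∃ m : ι → A → Bool, (∀ v, v ∉ M → m v = fixed v) ∧
        ∃ Dadd : Finset A, Dadd ⊆ D ∧ Dadd.card ≤ 1 ∧
          ∃ c ∈ C ∪ Dadd, c ≠ p ∧ aScoreAll m p < aScoreAll m c) ↔
    (∃ d ∈ C ∪ D, d ≠ p ∧ nScore M fixed p < nScore M fixed d + M.card) := by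
  constructor
  · rintro ⟨m, hm, Dadd, hsub, -, c, hc, hcp, hlt⟩
    refine ⟨c, Finset.union_subset_union_right hsub hc, hcp, ?_⟩
    rw [← nScore_congr M hm p, ← nScore_congr M hm c]
    exact (nScore_le_aScoreAll M m p).trans_lt
      (hlt.trans_le (aScoreAll_le_nScore_add_card M m c))
  · rintro ⟨d, hd, hdp, hlt⟩
    obtain ⟨Dadd, hsub, hcard, hdadd⟩ := Finset.exists_subset_card_le_one_mem_union hd
    refine ⟨approveOnly M fixed d, fun _ => approveOnly_of_notMem M fixed d, Dadd, hsub, hcard,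
      d, hdadd, hdp, ?_⟩
    rwa [aScoreAll_approveOnly_self, aScoreAll_approveOnly_of_ne M fixed (Ne.symm hdp)]

/-- Approval destructive control by adding candidates, with `k = M.card` cooperating
manipulators: `p` can be prevented from winning (by the chair adding at most one
candidate from the unregistered pool `D` and a suitable manipulation) iff some candidate
`d ∈ (C ∪ D) \ {p}` has non-manipulator approval score plus `k` strictly greater than
`p`'s non-manipulator approval score. -/
theorem stmt14 {ι A : Type*} [Fintype ι] [DecidableEq ι] [DecidableEq A]
    (C D : Finset A) (p : A) (hp : p ∈ C)
    (M : Finset ι) (fixed : ι → A → Bool) :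
    (∃ m : ι → A → Bool, (∀ v, v ∉ M → m v = fixed v) ∧
        ∃ Dadd : Finset A, Dadd ⊆ D ∧ Dadd.card ≤ 1 ∧
          ∃ c ∈ C ∪ Dadd, c ≠ p ∧ aScoreAll m p < aScoreAll m c) ↔
    (∃ d ∈ C ∪ D, d ≠ p ∧ nScore M fixed p < nScore M fixed d + M.card) :=
  stmt14_general C D p M fixed
end
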